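/- arXiv:2506.17649 — 2 statements merged into one kernel-verified Lean document; each statement's English description precedes it below -/
import Mathlib

section
/- A line L ⊂ ℙ³(ℂ) satisfies τ₁(L) = L and τ₂(L) = L if and only if there exists [λ:μ] ∈ ℙ¹(ℂ) such that L = L_{[λ:μ]} = {[x₀:x₁:x₂:x₃] ∈ ℙ³(ℂ) : λx₀ + μx₂ = 0 and λx₃ + μx₁ = 0}. -/
noncomputable section

/-- Projective 3-space over ℂ. -/
abbrev P3 := Projectivization ℂ (Fin 4 → ℂ)

/-- A line in ℙ³(ℂ): the image in ℙ³ of a 2-dimensional linear subspace of ℂ⁴. -/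
def IsLine (L : Set P3) : Prop :=
  ∃ W : Submodule ℂ (Fin 4 → ℂ), Module.finrank ℂ W = 2 ∧ L = {p : P3 | p.submodule ≤ W}

/-- A diagonal linear automorphism of ℂⁿ. -/
def diagEquiv {n : ℕ} (d : Fin n → ℂ) (hd : ∀ i, d i ≠ 0) : (Fin n → ℂ) ≃ₗ[ℂ] (Fin n → ℂ) :=
  LinearEquiv.piCongrRight fun i => LinearEquiv.smulOfNeZero ℂ ℂ (d i) (hd i)

/-- The linear automorphism of ℂ⁴ inducing τ₁ : [x₀:x₁:x₂:x₃] ↦ [x₃:x₂:x₁:x₀]. -/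
def tau1Equiv : (Fin 4 → ℂ) ≃ₗ[ℂ] (Fin 4 → ℂ) :=
  LinearEquiv.funCongrLeft ℂ ℂ (Equiv.subLeft (3 : Fin 4))

/-- The projective involution τ₁ of ℙ³. -/
def tau1P : P3 → P3 := Projectivization.map tau1Equiv.toLinearMap tau1Equiv.injective

/-- The linear automorphism of ℂ⁴ inducing τ₂ : [x₀:x₁:x₂:x₃] ↦ [x₀:−x₁:x₂:−x₃]. -/
def tau2Equiv : (Fin 4 → ℂ) ≃ₗ[ℂ] (Fin 4 → ℂ) :=
  diagEquiv ![1, -1, 1, -1] (by intro i; fin_cases i <;> norm_num)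

/-- The projective involution τ₂ of ℙ³. -/
def tau2P : P3 → P3 := Projectivization.map tau2Equiv.toLinearMap tau2Equiv.injective

/-- The line L_{[λ:μ]} = {λx₀ + μx₂ = 0, λx₃ + μx₁ = 0} ⊂ ℙ³.  (The defining conditions are
invariant under scaling of homogeneous coordinates, so testing them on the chosen
representative `p.rep` is well defined.) -/
def lineLM (l m : ℂ) : Set P3 :=
  {p : P3 | l * p.rep 0 + m * p.rep 2 = 0 ∧ l * p.rep 3 + m * p.rep 1 = 0}

/-!
Both involutions come from linear maps of ℂ⁴, so a line is invariant iff its plane `W ⊂ ℂ⁴` is.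
For a nonzero `w ∈ W`, either `w + τ₂ w` or `τ₁ w` is a nonzero vector `(a, 0, b, 0)` of `W`;
applying `τ₁` gives `(0, b, 0, a) ∈ W`, and these two vectors span the kernel of
`x ↦ (-b x₀ + a x₂, -b x₃ + a x₁)`, a plane, which is therefore `W`.
-/

open scoped LinearAlgebra.Projectivization

namespace Submodule

variable {K V V' : Type*} [DivisionRing K] [AddCommGroup V] [Module K V] [AddCommGroup V'] [Module K V']

theorem setOf_submodule_le_eq_projectivization (W : Submodule K V) :
    {p : ℙ K V | p.submodule ≤ W} = W.projectivization := by
  ext p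
  exact (W.mem_projectivization_iff_submodule_le p).symm

theorem coe_projectivization_inj {W₁ W₂ : Submodule K V} :
    (W₁.projectivization : Set (ℙ K V)) = W₂.projectivization ↔ W₁ = W₂ :=
  SetLike.coe_injective.eq_iff.trans projectivization.injective.eq_iff

theorem image_map_projectivization (σ : V ≃ₗ[K] V') (W : Submodule K V) :
    Projectivization.map σ.toLinearMap σ.injective '' W.projectivization =
      (W.map σ.toLinearMap).projectivization := by
  ext q
  induction q using Projectivization.ind with | h w hw =>
  constructor
  · rintro ⟨p, hp, hpq⟩
    induction p using Projectivization.ind with | h v hv =>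
    rw [Projectivization.map_mk] at hpq
    rw [← hpq, SetLike.mem_coe, mk_mem_projectivization_iff]
    exact mem_map_of_mem hp
  · intro hq
    have hw' : σ.symm w ≠ 0 := by simpa using hw
    refine ⟨Projectivization.mk K (σ.symm w) hw', ?_, ?_⟩
    · simpa [mem_map_equiv] using hq
    · simp [Projectivization.map_mk]

theorem image_map_projectivization_eq_iff [FiniteDimensional K V] (σ : V ≃ₗ[K] V)
    (W : Submodule K V) :
    Projectivization.map σ.toLinearMap σ.injective '' W.projectivization = W.projectivization ↔
      ∀ x ∈ W, σ x ∈ W := by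
  rw [image_map_projectivization, coe_projectivization_inj]
  refine ⟨fun h x hx => h ▸ mem_map_of_mem hx, fun h => ?_⟩
  exact eq_of_le_of_finrank_eq (map_le_iff_le_comap.mpr h) (σ.finrank_map_eq W)

end Submodule

theorem vec2_ne_zero_iff {α : Type*} [Zero α] {a b : α} : ![a, b] ≠ 0 ↔ a ≠ 0 ∨ b ≠ 0 := by
  rw [Matrix.cons_nonzero_iff, Matrix.cons_nonzero_iff]
  simp

def lineForm (l m : ℂ) : (Fin 4 → ℂ) →ₗ[ℂ] (Fin 2 → ℂ) where
  toFun x := ![l * x 0 + m * x 2, l * x 3 + m * x 1]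
  map_add' x y := by ext i; fin_cases i <;> simp <;> ring
  map_smul' c x := by ext i; fin_cases i <;> simp <;> ring

theorem mem_ker_lineForm {l m : ℂ} {x : Fin 4 → ℂ} :
    x ∈ LinearMap.ker (lineForm l m) ↔ l * x 0 + m * x 2 = 0 ∧ l * x 3 + m * x 1 = 0 := by
  simp [lineForm, funext_iff, Fin.forall_fin_two]

theorem lineForm_surjective {l m : ℂ} (hlm : ![l, m] ≠ 0) :
    Function.Surjective (lineForm l m) := by
  intro y
  rcases vec2_ne_zero_iff.mp hlm with hl | hm
  · refine ⟨![y 0 / l, 0, 0, y 1 / l], ?_⟩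
    ext i; fin_cases i <;> simp [lineForm] <;> field_simp
  · refine ⟨![0, y 1 / m, y 0 / m, 0], ?_⟩
    ext i; fin_cases i <;> simp [lineForm] <;> field_simp

theorem finrank_ker_lineForm {l m : ℂ} (hlm : ![l, m] ≠ 0) :
    Module.finrank ℂ (LinearMap.ker (lineForm l m)) = 2 := by
  have := LinearMap.finrank_range_add_finrank_ker (lineForm l m)
  rw [LinearMap.range_eq_top.mpr (lineForm_surjective hlm), finrank_top,
    Module.finrank_fin_fun, Module.finrank_fin_fun] at this
  omega

theorem lineLM_eq_projectivization_ker (l m : ℂ) :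
    lineLM l m = (LinearMap.ker (lineForm l m)).projectivization := by
  ext p
  rw [SetLike.mem_coe, Submodule.mem_projectivization_iff_submodule_le, p.submodule_eq,
    Submodule.span_singleton_le_iff_mem, mem_ker_lineForm]
  rfl

theorem ker_lineForm_le {W : Submodule ℂ (Fin 4 → ℂ)} {a b : ℂ} (hab : ![a, b] ≠ 0)
    (hv : ![a, 0, b, 0] ∈ W) (hw : ![0, b, 0, a] ∈ W) : LinearMap.ker (lineForm (-b) a) ≤ W := by
  intro x hx
  obtain ⟨h02, h31⟩ := mem_ker_lineForm.mp hx
  rcases vec2_ne_zero_iff.mp hab with ha | hb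
  · convert W.add_mem (W.smul_mem (x 0 / a) hv) (W.smul_mem (x 3 / a) hw) using 1
    ext i; fin_cases i <;> simp <;> field_simp
    · linear_combination h31
    · linear_combination h02
  · convert W.add_mem (W.smul_mem (x 2 / b) hv) (W.smul_mem (x 1 / b) hw) using 1
    ext i; fin_cases i <;> simp <;> field_simp
    · linear_combination -h02
    · linear_combination -h31

theorem tau1Equiv_apply (x : Fin 4 → ℂ) (i : Fin 4) : tau1Equiv x i = x (3 - i) := rfl

theorem tau2Equiv_apply (x : Fin 4 → ℂ) (i : Fin 4) :
    tau2Equiv x i = ![1, -1, 1, -1] i * x i := rfl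

theorem tau1Equiv_vec (a b c d : ℂ) : tau1Equiv ![a, b, c, d] = ![d, c, b, a] := by
  ext i; fin_cases i <;> rfl

theorem tau1Equiv_mem_ker_lineForm {l m : ℂ} {x : Fin 4 → ℂ}
    (hx : x ∈ LinearMap.ker (lineForm l m)) : tau1Equiv x ∈ LinearMap.ker (lineForm l m) := by
  rw [mem_ker_lineForm] at hx ⊢
  -- τ₁ swaps the two defining equations
  exact hx.symm

theorem tau2Equiv_mem_ker_lineForm {l m : ℂ} {x : Fin 4 → ℂ}
    (hx : x ∈ LinearMap.ker (lineForm l m)) : tau2Equiv x ∈ LinearMap.ker (lineForm l m) := by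
  rw [mem_ker_lineForm] at hx ⊢
  simp only [tau2Equiv_apply, Matrix.cons_val, Matrix.cons_val_zero, Matrix.cons_val_one,
    one_mul, neg_mul, mul_neg]
  exact ⟨hx.1, by linear_combination -hx.2⟩

theorem exists_vec_a0b0_mem_of_tau_invariant {W : Submodule ℂ (Fin 4 → ℂ)} (hW : W ≠ ⊥)
    (h1 : ∀ x ∈ W, tau1Equiv x ∈ W) (h2 : ∀ x ∈ W, tau2Equiv x ∈ W) :
    ∃ a b : ℂ, ![a, b] ≠ 0 ∧ ![a, 0, b, 0] ∈ W := by
  obtain ⟨w, hw, hw0⟩ := Submodule.exists_mem_ne_zero_of_ne_bot hW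
  by_cases h : w 0 = 0 ∧ w 2 = 0
  · refine ⟨w 3, w 1, ?_, ?_⟩
    · rw [vec2_ne_zero_iff]
      by_contra! h'
      exact hw0 (by ext i; fin_cases i <;> simp [h.1, h.2, h'.1, h'.2])
    · convert h1 w hw using 1
      ext i; fin_cases i <;> simp [tau1Equiv_apply, h.1, h.2]
  · refine ⟨2 * w 0, 2 * w 2, ?_, ?_⟩
    · simpa [vec2_ne_zero_iff, not_and_or] using h
    · convert W.add_mem hw (h2 w hw) using 1
      ext i; fin_cases i <;> simp [tau2Equiv_apply] <;> ring

theorem eq_ker_lineForm_of_tau_invariant {W : Submodule ℂ (Fin 4 → ℂ)}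
    (hW : Module.finrank ℂ W = 2) (h1 : ∀ x ∈ W, tau1Equiv x ∈ W)
    (h2 : ∀ x ∈ W, tau2Equiv x ∈ W) :
    ∃ l m : ℂ, ![l, m] ≠ 0 ∧ W = LinearMap.ker (lineForm l m) := by
  obtain ⟨a, b, hab, hv⟩ := exists_vec_a0b0_mem_of_tau_invariant (by rintro rfl; simp at hW) h1 h2
  have hw : ![0, b, 0, a] ∈ W := by simpa [tau1Equiv_vec] using h1 _ hv
  have hba : ![-b, a] ≠ 0 := by
    rw [vec2_ne_zero_iff, neg_ne_zero, or_comm]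
    exact vec2_ne_zero_iff.mp hab
  refine ⟨-b, a, hba, (Submodule.eq_of_le_of_finrank_eq (ker_lineForm_le hab hv hw) ?_).symm⟩
  rw [finrank_ker_lineForm hba, hW]

/-- a line L ⊂ ℙ³(ℂ) satisfies τ₁(L) = L and τ₂(L) = L if and only if
L = L_{[λ:μ]} for some [λ:μ] ∈ ℙ¹(ℂ). -/
theorem stmt4 (L : Set P3) (hL : IsLine L) :
    (tau1P '' L = L ∧ tau2P '' L = L) ↔
      ∃ l m : ℂ, (![l, m] : Fin 2 → ℂ) ≠ 0 ∧ L = lineLM l m := by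
  obtain ⟨W, hW, rfl⟩ := hL
  simp only [tau1P, tau2P, Submodule.setOf_submodule_le_eq_projectivization,
    Submodule.image_map_projectivization_eq_iff, lineLM_eq_projectivization_ker,
    Submodule.coe_projectivization_inj]
  constructor
  · rintro ⟨h1, h2⟩
    exact eq_ker_lineForm_of_tau_invariant hW h1 h2
  · rintro ⟨l, m, -, rfl⟩
    exact ⟨fun _ => tau1Equiv_mem_ker_lineForm, fun _ => tau2Equiv_mem_ker_lineForm⟩
end
end

section
/- Let ω ∈ ℂ be a primitive cube root of unity. For all [x:y] ∈ ℙ¹(ℂ) one has τ(ψ([x:y])) = ψ([y:x]) and σ(ψ([x:y])) = ψ([x:ωy]); consequently the curve Γ₁ = ψ(ℙ¹) is invariant under the group G = ⟨τ, σ⟩ ≅ ℤ/2 ⋊ ℤ/3 acting on ℙ⁴(ℂ). -/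
noncomputable section

/-- Projective 4-space over ℂ. -/
abbrev P4 := Projectivization ℂ (Fin 5 → ℂ)

/-- Homogeneous coordinates of ψ([x:y]) = [x⁵ : 2x³y² + y⁵ : x⁴y + xy⁴ : 2x²y³ + x⁵ : y⁵]. -/
def psiVec (x y : ℂ) : Fin 5 → ℂ :=
  ![x ^ 5, 2 * x ^ 3 * y ^ 2 + y ^ 5, x ^ 4 * y + x * y ^ 4, 2 * x ^ 2 * y ^ 3 + x ^ 5, y ^ 5]

/-- The linear automorphism of ℂ⁵ inducing τ : [x₀:x₁:x₂:x₃:x₄] ↦ [x₄:x₃:x₂:x₁:x₀]. -/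
def tauEquiv4 : (Fin 5 → ℂ) ≃ₗ[ℂ] (Fin 5 → ℂ) :=
  LinearEquiv.funCongrLeft ℂ ℂ (Equiv.subLeft (4 : Fin 5))

/-- The projective involution τ of ℙ⁴. -/
def tauP4 : P4 → P4 := Projectivization.map tauEquiv4.toLinearMap tauEquiv4.injective

/-- The linear automorphism of ℂ⁵ inducing
σ : [x₀:x₁:x₂:x₃:x₄] ↦ [x₀:ω²x₁:ωx₂:x₃:ω²x₄], for ω ≠ 0. -/
def sigmaEquiv4 (ω : ℂ) (hω : ω ≠ 0) : (Fin 5 → ℂ) ≃ₗ[ℂ] (Fin 5 → ℂ) :=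
  diagEquiv ![1, ω ^ 2, ω, 1, ω ^ 2]
    (by intro i; fin_cases i <;> simp [hω])

/-- The projective automorphism σ of ℙ⁴. -/
def sigmaP4 (ω : ℂ) (hω : ω ≠ 0) : P4 → P4 :=
  Projectivization.map (sigmaEquiv4 ω hω).toLinearMap (sigmaEquiv4 ω hω).injective

/-!
Every coordinate of `psiVec x y` is a polynomial whose monomials have `y`-degrees in a single
residue class mod 3, namely `0, 2, 1, 0, 2` for coordinates `0, …, 4`; so the substitution
`y ↦ ω y` multiplies the coordinates by `1, ω², ω, 1, ω²`, which is exactly `σ`. Reversing the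
coordinates exchanges the roles of `x` and `y`, which is `τ`.
-/

theorem Projectivization.map_mk_of_apply_eq {K V W : Type*} [DivisionRing K] [AddCommGroup V]
    [Module K V] [AddCommGroup W] [Module K W] {f : V →ₗ[K] W} (hf : Function.Injective f)
    {v : V} {w : W} (hv : v ≠ 0) (hw : w ≠ 0) (h : f v = w) :
    Projectivization.map f hf (Projectivization.mk K v hv) = Projectivization.mk K w hw := by
  subst h
  exact Projectivization.map_mk f hf v hv

theorem diagEquiv_apply {n : ℕ} (d : Fin n → ℂ) (hd : ∀ i, d i ≠ 0) (v : Fin n → ℂ) (i : Fin n) :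
    diagEquiv d hd v i = d i * v i :=
  rfl

theorem tauEquiv4_psiVec (x y : ℂ) : tauEquiv4 (psiVec x y) = psiVec y x := by
  funext i
  fin_cases i <;>
    simp only [tauEquiv4, LinearEquiv.funCongrLeft_apply, LinearMap.funLeft_apply, Equiv.subLeft,
      Equiv.coe_fn_mk, psiVec, Fin.isValue, Fin.zero_eta, Fin.mk_one, Fin.reduceFinMk, Fin.reduceSub,
      sub_zero, sub_self, Matrix.cons_val, Matrix.cons_val_zero, Matrix.cons_val_one] <;>
    ring

theorem sigmaEquiv4_psiVec {ω : ℂ} (hω3 : ω ^ 3 = 1) (hω : ω ≠ 0) (x y : ℂ) :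
    sigmaEquiv4 ω hω (psiVec x y) = psiVec x (ω * y) := by
  funext i
  fin_cases i <;>
    simp only [sigmaEquiv4, diagEquiv_apply, psiVec, Fin.isValue, Fin.zero_eta, Fin.mk_one,
      Fin.reduceFinMk, Matrix.cons_val, Matrix.cons_val_zero, Matrix.cons_val_one, one_mul]
  · linear_combination (-ω ^ 2 * y ^ 5) * hω3
  · linear_combination (-ω * x * y ^ 4) * hω3
  · linear_combination (-2 * x ^ 2 * y ^ 3) * hω3
  · linear_combination (-ω ^ 2 * y ^ 5) * hω3

/-- for ω a primitive cube root of unity, τ(ψ([x:y])) = ψ([y:x]) and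
σ(ψ([x:y])) = ψ([x:ωy]) for all [x:y] ∈ ℙ¹; hence Γ₁ = ψ(ℙ¹) is invariant under
G = ⟨τ, σ⟩ ≅ ℤ/2 ⋊ ℤ/3. -/
theorem stmt10 (ω : ℂ) (hω : IsPrimitiveRoot ω 3) (x y : ℂ)
    (h1 : psiVec x y ≠ 0) (h2 : psiVec y x ≠ 0) (h3 : psiVec x (ω * y) ≠ 0) :
    tauP4 (Projectivization.mk ℂ (psiVec x y) h1) = Projectivization.mk ℂ (psiVec y x) h2 ∧
      sigmaP4 ω (hω.ne_zero (by norm_num)) (Projectivization.mk ℂ (psiVec x y) h1) =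
        Projectivization.mk ℂ (psiVec x (ω * y)) h3 :=
  ⟨Projectivization.map_mk_of_apply_eq tauEquiv4.injective h1 h2 (tauEquiv4_psiVec x y),
    Projectivization.map_mk_of_apply_eq (sigmaEquiv4 ω _).injective h1 h3
      (sigmaEquiv4_psiVec hω.pow_eq_one _ x y)⟩
end
end
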